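/- arXiv:0911.2649 — 4 statements merged into one kernel-verified Lean document; each statement's English description precedes it below -/
import Mathlib

section
/- Fix n ≥ 4 and let G(n) be the Keel presentation group of Pic(\bar{M}_{0,n}). Then G(n) is generated as an abelian group by the images of the generators δ_A with A non-adjacent; i.e., the classes of the non-adjacent divisors span G(n). -/
open scoped Classical

/-- A subset `A ⊆ ZMod n` is a cyclic interval if `A = {a, a+1, …, a+(k−1)}`
for some `a ∈ ZMod n` and `k ≥ 1` (addition in `ZMod n`). -/
def IsCyclicInterval {n : ℕ} (A : Finset (ZMod n)) : Prop :=
  ∃ (a : ZMod n) (k : ℕ), 1 ≤ k ∧ A = (Finset.range k).image (fun i : ℕ => a + (i : ZMod n))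

/-- The index set `Dn = {A ⊆ ZMod n : 2 ≤ |A| ≤ n−2}` of boundary divisors. -/
abbrev DivIdx (n : ℕ) := {A : Finset (ZMod n) // 2 ≤ A.card ∧ A.card ≤ n - 2}

/-- The complement, as an element of `Dn`. -/
noncomputable def complIdx (n : ℕ) (hn : 4 ≤ n) (A : DivIdx n) : DivIdx n :=
  haveI : NeZero n := ⟨by omega⟩
  ⟨(A : Finset (ZMod n))ᶜ, by
    have h1 := A.prop.1
    have h2 := A.prop.2
    have hc : (A : Finset (ZMod n))ᶜ.card = n - (A : Finset (ZMod n)).card := by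
      rw [Finset.card_compl, ZMod.card]
    omega⟩

/-- The Keel relation element associated to four (pairwise distinct) points
`i, j, k, l`: `(Σ_{A : i,j∈A, k,l∉A} δ_A) − (Σ_{A : i,k∈A, j,l∉A} δ_A)`. -/
noncomputable def keelElt (n : ℕ) (hn : 4 ≤ n) (i j k l : ZMod n) :
    FreeAbelianGroup (DivIdx n) :=
  haveI : NeZero n := ⟨by omega⟩
  (∑ A ∈ Finset.univ.filter (fun A : DivIdx n =>
      i ∈ A.val ∧ j ∈ A.val ∧ k ∉ A.val ∧ l ∉ A.val), FreeAbelianGroup.of A)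
  - (∑ A ∈ Finset.univ.filter (fun A : DivIdx n =>
      i ∈ A.val ∧ k ∈ A.val ∧ j ∉ A.val ∧ l ∉ A.val), FreeAbelianGroup.of A)

/-- The subgroup `R` of relations of the Keel presentation: generated by
`δ_A − δ_{A^c}` for `A ∈ Dn`, together with the Keel relations for every four
pairwise distinct points `i, j, k, l ∈ ZMod n`. -/
noncomputable def KeelRelations (n : ℕ) (hn : 4 ≤ n) :
    AddSubgroup (FreeAbelianGroup (DivIdx n)) :=
  AddSubgroup.closure
    ({x | ∃ A : DivIdx n, x = FreeAbelianGroup.of A - FreeAbelianGroup.of (complIdx n hn A)} ∪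
     {x | ∃ i j k l : ZMod n, i ≠ j ∧ i ≠ k ∧ i ≠ l ∧ j ≠ k ∧ j ≠ l ∧ k ≠ l ∧
        x = keelElt n hn i j k l})

/-- The Keel presentation group `G(n) = F/R` of `Pic(M̄_{0,n})`. -/
abbrev KeelGroup (n : ℕ) (hn : 4 ≤ n) :=
  FreeAbelianGroup (DivIdx n) ⧸ KeelRelations n hn

/-!
For a cyclic interval `A = {a, …, b}`, Keel's relation for the points `(a, b, b + 1, a - 1)`
reads `δ_A + ∑ δ_B = ∑ δ_C`, where `B` runs over the other sets containing `a, b` but not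
`b + 1, a - 1`, and `C` over the sets containing `a, b + 1` but not `b, a - 1`. A cyclic
interval containing `a` but not `a - 1` starts at `a`; hence none of the `B` and `C` is a cyclic
interval, and `δ_A` lies in the span of the non-adjacent classes.
-/

namespace ZMod

variable {n : ℕ}

theorem val_add_natCast_sub_self (a : ZMod n) {t : ℕ} (ht : t < n) :
    (a + (t : ZMod n) - a).val = t := by
  rw [add_sub_cancel_left, val_cast_of_lt ht]

variable [NeZero n]

theorem val_sub_one_sub_self (a : ZMod n) : (a - 1 - a).val = n - 1 := by
  obtain ⟨m, rfl⟩ := Nat.exists_eq_succ_of_ne_zero (NeZero.ne n)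
  rw [sub_sub_cancel_left, val_neg_one, Nat.succ_sub_one]

theorem mem_image_range_add_iff (a x : ZMod n) {k : ℕ} (hk : k ≤ n) :
    x ∈ (Finset.range k).image (fun i : ℕ => a + (i : ZMod n)) ↔ (x - a).val < k := by
  simp only [Finset.mem_image, Finset.mem_range]
  constructor
  · rintro ⟨i, hi, rfl⟩
    rwa [val_add_natCast_sub_self a (hi.trans_le hk)]
  · exact fun h => ⟨(x - a).val, h, by rw [natCast_zmod_val, add_sub_cancel]⟩

end ZMod

namespace IsCyclicInterval

open ZMod

variable {n : ℕ} [NeZero n] {B : Finset (ZMod n)}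

theorem exists_forall_mem_iff_val_sub_lt (hB : IsCyclicInterval B) (hcard : B.card < n) :
    ∃ a : ZMod n, ∀ x, x ∈ B ↔ (x - a).val < B.card := by
  obtain ⟨a, k, -, rfl⟩ := hB
  have hkn : k < n := by
    by_contra! hnk
    have huniv : (Finset.range k).image (fun i : ℕ => a + (i : ZMod n)) = Finset.univ :=
      Finset.eq_univ_iff_forall.2 fun x => Finset.mem_image.2 ⟨(x - a).val,
        Finset.mem_range.2 ((val_lt _).trans_le hnk), by rw [natCast_zmod_val, add_sub_cancel]⟩
    exact hcard.ne (by rw [huniv, Finset.card_univ, ZMod.card])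
  have hinj : Set.InjOn (fun i : ℕ => a + (i : ZMod n)) (Finset.range k) := fun i hi j hj h => by
    simp only [Finset.coe_range, Set.mem_Iio] at hi hj
    simpa [Nat.mod_eq_of_lt (hi.trans hkn), Nat.mod_eq_of_lt (hj.trans hkn)]
      using congrArg (fun x => (x - a).val) h
  rw [Finset.card_image_of_injOn hinj, Finset.card_range]
  exact ⟨a, fun x => mem_image_range_add_iff a x hkn.le⟩

theorem mem_of_val_sub_le (hB : IsCyclicInterval B) {a x y : ZMod n} (ha : a ∈ B)
    (ha' : a - 1 ∉ B) (hx : x ∈ B) (hyx : (y - a).val ≤ (x - a).val) : y ∈ B := by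
  obtain ⟨c, k, -, rfl⟩ := hB
  have hkn : k < n := by
    by_contra! hnk
    exact ha' (Finset.mem_image.2 ⟨(a - 1 - c).val, Finset.mem_range.2 ((val_lt _).trans_le hnk),
      by rw [natCast_zmod_val, add_sub_cancel]⟩)
  simp only [mem_image_range_add_iff _ _ hkn.le] at *
  have hstart : (a - c).val = 0 := by
    by_contra ht
    have hpred : a - 1 - c = (((a - c).val - 1 : ℕ) : ZMod n) := by
      rw [Nat.cast_pred (Nat.pos_of_ne_zero ht), natCast_zmod_val]; ring
    rw [hpred, val_cast_of_lt (by omega)] at ha'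
    omega
  obtain rfl : a = c := sub_eq_zero.1 ((val_eq_zero _).1 hstart)
  omega

end IsCyclicInterval

theorem FreeAbelianGroup.eq_top_of_forall_mk_of_mem {X : Type*}
    {N : AddSubgroup (FreeAbelianGroup X)}
    {H : AddSubgroup (FreeAbelianGroup X ⧸ N)}
    (h : ∀ x, (QuotientAddGroup.mk (FreeAbelianGroup.of x) : FreeAbelianGroup X ⧸ N) ∈ H) :
    H = ⊤ := by
  rw [eq_top_iff]
  rintro y -
  obtain ⟨y, rfl⟩ := QuotientAddGroup.mk_surjective y
  induction y using FreeAbelianGroup.induction_on with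
  | zero => exact zero_mem H
  | of x => exact h x
  | neg y hy => exact neg_mem hy
  | add y z hy hz => exact add_mem hy hz

namespace KeelGroup

open ZMod

variable {n : ℕ}

noncomputable def nonadjacentSpan (n : ℕ) (hn : 4 ≤ n) : AddSubgroup (KeelGroup n hn) :=
  AddSubgroup.closure
    {x : KeelGroup n hn | ∃ A : DivIdx n, ¬ IsCyclicInterval (A : Finset (ZMod n)) ∧
      x = QuotientAddGroup.mk (FreeAbelianGroup.of A)}

theorem mk_of_mem_of_keel {hn : 4 ≤ n} (H : AddSubgroup (KeelGroup n hn)) {i j k l : ZMod n}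
    (hij : i ≠ j) (hik : i ≠ k) (hil : i ≠ l) (hjk : j ≠ k) (hjl : j ≠ l) (hkl : k ≠ l)
    {A : DivIdx n} (hA : i ∈ A.val ∧ j ∈ A.val ∧ k ∉ A.val ∧ l ∉ A.val)
    (hleft : ∀ B : DivIdx n, i ∈ B.val ∧ j ∈ B.val ∧ k ∉ B.val ∧ l ∉ B.val → B ≠ A →
      (QuotientAddGroup.mk (FreeAbelianGroup.of B) : KeelGroup n hn) ∈ H)
    (hright : ∀ B : DivIdx n, i ∈ B.val ∧ k ∈ B.val ∧ j ∉ B.val ∧ l ∉ B.val →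
      (QuotientAddGroup.mk (FreeAbelianGroup.of B) : KeelGroup n hn) ∈ H) :
    (QuotientAddGroup.mk (FreeAbelianGroup.of A) : KeelGroup n hn) ∈ H := by
  have : NeZero n := ⟨by omega⟩
  set π := QuotientAddGroup.mk' (KeelRelations n hn)
  have hrel : π (keelElt n hn i j k l) = 0 :=
    (QuotientAddGroup.eq_zero_iff _).2
      (AddSubgroup.subset_closure (Or.inr ⟨i, j, k, l, hij, hik, hil, hjk, hjl, hkl, rfl⟩))
  have hAleft : A ∈ Finset.univ.filter fun B : DivIdx n =>
      i ∈ B.val ∧ j ∈ B.val ∧ k ∉ B.val ∧ l ∉ B.val :=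
    Finset.mem_filter.2 ⟨Finset.mem_univ _, hA⟩
  rw [keelElt, map_sub, sub_eq_zero, ← Finset.add_sum_erase _ FreeAbelianGroup.of hAleft,
    map_add, map_sum, map_sum] at hrel
  change π (FreeAbelianGroup.of A) ∈ H
  rw [eq_sub_of_add_eq hrel]
  refine sub_mem (AddSubgroup.sum_mem _ fun B hB => hright B (Finset.mem_filter.1 hB).2)
    (AddSubgroup.sum_mem _ fun B hB => ?_)
  obtain ⟨hBA, hB⟩ := Finset.mem_erase.1 hB
  exact hleft B (Finset.mem_filter.1 hB).2 hBA

theorem mk_mem_nonadjacentSpan_of_isCyclicInterval (hn : 4 ≤ n) {A : DivIdx n}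
    (hA : IsCyclicInterval A.val) :
    (QuotientAddGroup.mk (FreeAbelianGroup.of A) : KeelGroup n hn) ∈ nonadjacentSpan n hn := by
  have : NeZero n := ⟨by omega⟩
  obtain ⟨h2k, hkn⟩ := A.prop
  set k := A.val.card
  obtain ⟨a, hmem⟩ := hA.exists_forall_mem_iff_val_sub_lt (by omega)
  have hoff_i : (a - a).val = 0 := by rw [sub_self, val_zero]
  have hoff_j : (a + ((k - 1 : ℕ) : ZMod n) - a).val = k - 1 :=
    val_add_natCast_sub_self a (by omega)
  have hoff_k : (a + (k : ZMod n) - a).val = k := val_add_natCast_sub_self a (by omega)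
  have hoff_l : (a - 1 - a).val = n - 1 := val_sub_one_sub_self a
  have hne : ∀ x y : ZMod n, (x - a).val ≠ (y - a).val → x ≠ y := fun x y h hxy => h (hxy ▸ rfl)
  refine mk_of_mem_of_keel _ (i := a) (j := a + ((k - 1 : ℕ) : ZMod n)) (k := a + (k : ZMod n))
    (l := a - 1) (hne _ _ (by omega)) (hne _ _ (by omega)) (hne _ _ (by omega))
    (hne _ _ (by omega)) (hne _ _ (by omega)) (hne _ _ (by omega))
    (by simp only [hmem]; omega) (fun B ⟨hi, hj, hk, hl⟩ hBA => ?_) (fun B ⟨hi, hk, hj, hl⟩ => ?_)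
  · refine AddSubgroup.subset_closure
      ⟨B, fun hB => hBA (Subtype.ext (Finset.ext fun x => ?_)), rfl⟩
    rw [hmem]
    refine ⟨fun hx => ?_, fun hx => hB.mem_of_val_sub_le hi hl hj (by omega)⟩
    by_contra! hkx
    exact hk (hB.mem_of_val_sub_le hi hl hx (by omega))
  · exact AddSubgroup.subset_closure
      ⟨B, fun hB => hj (hB.mem_of_val_sub_le hi hl hk (by omega)), rfl⟩

end KeelGroup

/-- `G(n)` is generated as an abelian group by the images of the
generators `δ_A` with `A` non-adjacent; i.e. the classes of the non-adjacent
divisors span `G(n)`. -/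
theorem nonadjacent_classes_span (n : ℕ) (hn : 4 ≤ n) :
    AddSubgroup.closure
      {x : KeelGroup n hn | ∃ A : DivIdx n, ¬ IsCyclicInterval (A : Finset (ZMod n)) ∧
        x = QuotientAddGroup.mk (FreeAbelianGroup.of A)} = ⊤ := by
  refine FreeAbelianGroup.eq_top_of_forall_mk_of_mem fun A => ?_
  by_cases hA : IsCyclicInterval A.val
  · exact KeelGroup.mk_mem_nonadjacentSpan_of_isCyclicInterval hn hA
  · exact AddSubgroup.subset_closure ⟨A, hA, rfl⟩
end

section
/- Fix n ≥ 4 and let G(n) be the Keel presentation group of Pic(\bar{M}_{0,n}). Let m ∈ ZMod n, let p be a natural number with 1 ≤ p ≤ n−3, and let I = {m, m+1, …, m+p} ⊆ ZMod n. Then in G(n): [δ_I] = Σ_{A ∈ L} [δ_A] − Σ_{A ∈ K} [δ_A], where L = {A ∈ Dn : m−1 ∈ A, m+p ∈ A, m ∉ A, m+p+1 ∉ A} and K = {A ∈ Dn : m−1 ∈ A, m+p+1 ∈ A, m ∉ A, m+p ∉ A, A ≠ I^c}. Moreover every A ∈ L ∪ K is non-adjacent. -/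
open scoped Classical

/- ----------------- auxiliary lemmas ----------------- -/

private lemma mem_cyc {n : ℕ} [NeZero n] (a : ZMod n) (k : ℕ) (hk : k ≤ n) (x : ZMod n) :
    x ∈ (Finset.range k).image (fun i : ℕ => a + (i : ZMod n)) ↔ (x - a).val < k := by
  simp only [Finset.mem_image, Finset.mem_range]
  constructor
  · rintro ⟨i, hi, rfl⟩
    have h1 : (a + (i : ZMod n) - a) = (i : ZMod n) := by ring
    rw [h1, ZMod.val_cast_of_lt (lt_of_lt_of_le hi hk)]
    exact hi
  · intro h
    exact ⟨(x - a).val, h, by rw [ZMod.natCast_val, ZMod.cast_id]; ring⟩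

private lemma val_one' {n : ℕ} (hn : 1 < n) : (1 : ZMod n).val = 1 := by
  rw [ZMod.val_one_eq_one_mod, Nat.mod_eq_of_lt hn]

/-- right endpoint of a cyclic interval -/
private lemma right_endpoint {n : ℕ} [NeZero n] {a x : ZMod n} {k : ℕ}
    (hk1 : 1 ≤ k) (hkn : k < n)
    (hx : (x - a).val < k) (hx1 : ¬ (x + 1 - a).val < k) : (x - a).val = k - 1 := by
  have h1 : x + 1 - a = (x - a) + 1 := by ring
  have hv : (x + 1 - a).val = ((x - a).val + 1) % n := by
    rw [h1, ZMod.val_add, val_one' (by omega)]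
  have hu : (x - a).val < n := ZMod.val_lt _
  rcases Nat.lt_or_ge ((x - a).val + 1) n with h | h
  · rw [hv, Nat.mod_eq_of_lt h] at hx1; omega
  · have h2 : (x - a).val + 1 = n := by omega
    rw [hv, h2, Nat.mod_self] at hx1; omega

/-- left endpoint of a cyclic interval -/
private lemma left_endpoint {n : ℕ} [NeZero n] {a x : ZMod n} {k : ℕ}
    (hk1 : 1 ≤ k) (hkn : k < n)
    (hx : (x - a).val < k) (hx1 : ¬ (x - 1 - a).val < k) : x = a := by
  have h1 : x - a = (x - 1 - a) + 1 := by ring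
  have hv : (x - a).val = ((x - 1 - a).val + 1) % n := by
    rw [h1, ZMod.val_add, val_one' (by omega)]
  have hu : (x - 1 - a).val < n := ZMod.val_lt _
  rcases Nat.lt_or_ge ((x - 1 - a).val + 1) n with h | h
  · rw [hv, Nat.mod_eq_of_lt h] at hx; omega
  · have h2 : (x - 1 - a).val + 1 = n := by omega
    have hx0 : (x - a).val = 0 := by rw [hv, h2, Nat.mod_self]
    have h3 : (x - a) = 0 := (ZMod.val_eq_zero _).mp hx0
    linear_combination h3

example : True := trivial

private lemma k_lt_n {n : ℕ} (hn : 4 ≤ n) (A : DivIdx n) {a : ZMod n} {k : ℕ}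
    (hA : A.val = (Finset.range k).image (fun i : ℕ => a + (i : ZMod n))) : k < n := by
  haveI : NeZero n := ⟨by omega⟩
  by_contra hcon
  push_neg at hcon
  have huniv : A.val = Finset.univ := Finset.eq_univ_iff_forall.mpr fun x => by
    rw [hA]
    exact Finset.mem_image.mpr ⟨(x - a).val, Finset.mem_range.mpr
      (lt_of_lt_of_le (ZMod.val_lt _) hcon), by rw [ZMod.natCast_val, ZMod.cast_id]; ring⟩
  have hc := A.prop.2
  rw [huniv, Finset.card_univ, ZMod.card] at hc
  omega

private lemma not_cyc_L {n : ℕ} (hn : 4 ≤ n) {p : ℕ} (hp1 : 1 ≤ p) (hp2 : p ≤ n - 3)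
    (m : ZMod n) (A : DivIdx n)
    (h1 : m - 1 ∈ A.val) (h2 : m + (p : ZMod n) ∈ A.val) (h3 : m ∉ A.val)
    (h4 : m + (p : ZMod n) + 1 ∉ A.val) : ¬ IsCyclicInterval A.val := by
  haveI : NeZero n := ⟨by omega⟩
  rintro ⟨a, k, hk, hA⟩
  have hkn : k < n := k_lt_n hn A hA
  rw [hA, mem_cyc a k hkn.le] at h1 h2 h3 h4
  have u1 : (m - 1 - a).val = k - 1 := right_endpoint hk hkn h1
    (by rw [show m - 1 + 1 - a = m - a by ring]; exact h3)
  have u2 : (m + (p : ZMod n) - a).val = k - 1 := right_endpoint hk hkn h2 h4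
  have heq : m - 1 - a = m + (p : ZMod n) - a := ZMod.val_injective n (u1.trans u2.symm)
  have hz : ((p + 1 : ℕ) : ZMod n) = 0 := by push_cast; linear_combination -heq
  have hd := (ZMod.natCast_eq_zero_iff _ n).mp hz
  have hle := Nat.le_of_dvd (by omega) hd
  omega


private lemma not_cyc_K {n : ℕ} [NeZero n] (hn : 4 ≤ n) {p : ℕ} (hp1 : 1 ≤ p) (hp2 : p ≤ n - 3)
    (m : ZMod n) (A : DivIdx n) (I : DivIdx n)
    (hI : (I : Finset (ZMod n)) = (Finset.range (p + 1)).image (fun i : ℕ => m + (i : ZMod n)))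
    (h1 : m - 1 ∈ A.val) (h2 : m + (p : ZMod n) + 1 ∈ A.val) (h3 : m ∉ A.val)
    (h4 : m + (p : ZMod n) ∉ A.val) (h5 : A.val ≠ (I : Finset (ZMod n))ᶜ) :
    ¬ IsCyclicInterval A.val := by
  rintro ⟨a, k, hk, hA⟩
  have hkn : k < n := k_lt_n hn A hA
  rw [hA, mem_cyc a k hkn.le] at h1 h2 h3 h4
  have u1 : (m - 1 - a).val = k - 1 := right_endpoint hk hkn h1
    (by rw [show m - 1 + 1 - a = m - a by ring]; exact h3)
  have ha : m + (p : ZMod n) + 1 = a := left_endpoint hk hkn h2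
    (by rw [show m + (p : ZMod n) + 1 - 1 - a = m + (p : ZMod n) - a by ring]; exact h4)
  -- derive k = n - p - 1
  have e2 : m - 1 - a = ((n - (p + 2) : ℕ) : ZMod n) := by
    have h6 : ((n - (p + 2) : ℕ) : ZMod n) = - (((p + 2 : ℕ)) : ZMod n) := by
      rw [Nat.cast_sub (by omega : p + 2 ≤ n)]
      rw [ZMod.natCast_self]; ring
    rw [h6, ← ha]; push_cast; ring
  have u2 : (m - 1 - a).val = n - (p + 2) := by
    rw [e2, ZMod.val_cast_of_lt (by omega)]
  have hkeq : k = n - p - 1 := by omega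
  -- conclude A.val = Iᶜ, contradiction
  apply h5
  ext x
  rw [hA, Finset.mem_compl, hI, mem_cyc a k hkn.le, mem_cyc m (p + 1) (by omega)]
  have hrel : x - m = (x - a) + ((p + 1 : ℕ) : ZMod n) := by
    rw [← ha]; push_cast; ring
  have ht : (x - m).val = ((x - a).val + (p + 1)) % n := by
    rw [hrel, ZMod.val_add, ZMod.val_cast_of_lt (by omega : p + 1 < n)]
  have hw : (x - a).val < n := ZMod.val_lt _
  have htn : (x - m).val < n := ZMod.val_lt _
  by_cases hcase : (x - a).val + (p + 1) < n
  · rw [Nat.mod_eq_of_lt hcase] at ht; omega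
  · have h6 : ((x - a).val + (p + 1)) % n = (x - a).val + (p + 1) - n := by
      rw [Nat.mod_eq_sub_mod (by omega), Nat.mod_eq_of_lt (by omega)]
    rw [h6] at ht; omega

/-- for `I = {m, m+1, …, m+p}` with `1 ≤ p ≤ n−3`, in `G(n)` one has
`[δ_I] = Σ_{A ∈ L} [δ_A] − Σ_{A ∈ K} [δ_A]`, where
`L = {A ∈ Dn : m−1 ∈ A, m+p ∈ A, m ∉ A, m+p+1 ∉ A}` and
`K = {A ∈ Dn : m−1 ∈ A, m+p+1 ∈ A, m ∉ A, m+p ∉ A, A ≠ Iᶜ}`.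
Moreover every `A ∈ L ∪ K` is non-adjacent. -/
theorem interval_class_in_nonadjacent_basis (n : ℕ) (hn : 4 ≤ n) (m : ZMod n) (p : ℕ)
    (hp1 : 1 ≤ p) (hp2 : p ≤ n - 3) (I : DivIdx n)
    (hI : (I : Finset (ZMod n)) = (Finset.range (p + 1)).image (fun i : ℕ => m + (i : ZMod n))) :
    haveI : NeZero n := ⟨by omega⟩
    let L : Finset (DivIdx n) := Finset.univ.filter (fun A : DivIdx n =>
      m - 1 ∈ A.val ∧ m + (p : ZMod n) ∈ A.val ∧ m ∉ A.val ∧ m + (p : ZMod n) + 1 ∉ A.val)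
    let K : Finset (DivIdx n) := Finset.univ.filter (fun A : DivIdx n =>
      m - 1 ∈ A.val ∧ m + (p : ZMod n) + 1 ∈ A.val ∧ m ∉ A.val ∧ m + (p : ZMod n) ∉ A.val ∧
        A.val ≠ (I : Finset (ZMod n))ᶜ)
    ((QuotientAddGroup.mk (FreeAbelianGroup.of I) : KeelGroup n hn) =
      (∑ A ∈ L, (QuotientAddGroup.mk (FreeAbelianGroup.of A) : KeelGroup n hn)) -
      (∑ A ∈ K, (QuotientAddGroup.mk (FreeAbelianGroup.of A) : KeelGroup n hn))) ∧
    ∀ A ∈ L ∪ K, ¬ IsCyclicInterval (A : Finset (ZMod n)) := by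
  haveI : NeZero n := ⟨by omega⟩
  intro L K
  have hLdef : L = Finset.univ.filter (fun A : DivIdx n =>
      m - 1 ∈ A.val ∧ m + (p : ZMod n) ∈ A.val ∧ m ∉ A.val ∧ m + (p : ZMod n) + 1 ∉ A.val) := rfl
  have hKdef : K = Finset.univ.filter (fun A : DivIdx n =>
      m - 1 ∈ A.val ∧ m + (p : ZMod n) + 1 ∈ A.val ∧ m ∉ A.val ∧ m + (p : ZMod n) ∉ A.val ∧
        A.val ≠ (I : Finset (ZMod n))ᶜ) := rfl
  -- membership facts for I
  have hmemI : ∀ x : ZMod n, x ∈ (I : Finset (ZMod n)) ↔ (x - m).val < p + 1 := fun x => by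
    rw [hI, mem_cyc m (p + 1) (by omega)]
  have hmI : m ∈ (I : Finset (ZMod n)) := by
    rw [hmemI, sub_self, ZMod.val_zero]; omega
  have hmpI : m + (p : ZMod n) ∈ (I : Finset (ZMod n)) := by
    rw [hmemI, show m + (p : ZMod n) - m = ((p : ℕ) : ZMod n) by ring,
      ZMod.val_cast_of_lt (by omega)]
    omega
  have hm1I : m - 1 ∉ (I : Finset (ZMod n)) := by
    rw [hmemI]
    have e : m - 1 - m = ((n - 1 : ℕ) : ZMod n) := by
      rw [Nat.cast_sub (by omega : 1 ≤ n), ZMod.natCast_self]; ring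
    rw [e, ZMod.val_cast_of_lt (by omega)]; omega
  have hmp1I : m + (p : ZMod n) + 1 ∉ (I : Finset (ZMod n)) := by
    rw [hmemI, show m + (p : ZMod n) + 1 - m = ((p + 1 : ℕ) : ZMod n) by push_cast; ring,
      ZMod.val_cast_of_lt (by omega)]
    omega
  -- pairwise distinctness
  have hne : ∀ q : ℕ, 0 < q → q < n → ((q : ℕ) : ZMod n) ≠ 0 := fun q h0 h1 h => by
    have := Nat.le_of_dvd h0 ((ZMod.natCast_eq_zero_iff q n).mp h)
    omega
  have d1 : m - 1 ≠ m + (p : ZMod n) := fun h =>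
    hne (p + 1) (by omega) (by omega) (by push_cast; linear_combination -h)
  have d2 : m - 1 ≠ m := fun h =>
    hne 1 (by omega) (by omega) (by push_cast; linear_combination -h)
  have d3 : m - 1 ≠ m + (p : ZMod n) + 1 := fun h =>
    hne (p + 2) (by omega) (by omega) (by push_cast; linear_combination -h)
  have d4 : m + (p : ZMod n) ≠ m := fun h =>
    hne p (by omega) (by omega) (by push_cast; linear_combination h)
  have d5 : m + (p : ZMod n) ≠ m + (p : ZMod n) + 1 := fun h =>
    hne 1 (by omega) (by omega) (by push_cast; linear_combination -h)
  have d6 : m ≠ m + (p : ZMod n) + 1 := fun h =>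
    hne (p + 1) (by omega) (by omega) (by push_cast; linear_combination -h)
  set cI := complIdx n hn I with hcIdef
  have hcIval : (cI : Finset (ZMod n)) = (I : Finset (ZMod n))ᶜ := rfl
  constructor
  · -- the identity in the Keel group
    have hmk : ∀ x : FreeAbelianGroup (DivIdx n),
        (QuotientAddGroup.mk x : KeelGroup n hn)
          = QuotientAddGroup.mk' (KeelRelations n hn) x := fun _ => rfl
    simp only [hmk]
    rw [← map_sum, ← map_sum, ← map_sub]
    refine (QuotientAddGroup.eq_iff_sub_mem).mpr ?_
    have hsub1 : FreeAbelianGroup.of I - FreeAbelianGroup.of cI ∈ KeelRelations n hn :=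
      AddSubgroup.subset_closure (Or.inl ⟨I, rfl⟩)
    have hkeel1 : keelElt n hn (m - 1) (m + (p : ZMod n)) m (m + (p : ZMod n) + 1)
        ∈ KeelRelations n hn :=
      AddSubgroup.subset_closure (Or.inr ⟨_, _, _, _, d1, d2, d3, d4, d5, d6, rfl⟩)
    have hkeel2 : keelElt n hn (m - 1) (m + (p : ZMod n) + 1) m (m + (p : ZMod n))
        ∈ KeelRelations n hn :=
      AddSubgroup.subset_closure
        (Or.inr ⟨_, _, _, _, d3, d2, d1, Ne.symm d6, Ne.symm d5, Ne.symm d4, rfl⟩)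
    have hT2S2 : (Finset.univ.filter (fun A : DivIdx n =>
          m - 1 ∈ A.val ∧ m ∈ A.val ∧ m + (p : ZMod n) + 1 ∉ A.val ∧ m + (p : ZMod n) ∉ A.val))
        = (Finset.univ.filter (fun A : DivIdx n =>
          m - 1 ∈ A.val ∧ m ∈ A.val ∧ m + (p : ZMod n) ∉ A.val ∧ m + (p : ZMod n) + 1 ∉ A.val)) :=
      Finset.filter_congr (fun A _ => by tauto)
    have hcImem : cI ∈ Finset.univ.filter (fun A : DivIdx n =>
        m - 1 ∈ A.val ∧ m + (p : ZMod n) + 1 ∈ A.val ∧ m ∉ A.val ∧ m + (p : ZMod n) ∉ A.val) := by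
      rw [Finset.mem_filter]
      refine ⟨Finset.mem_univ _, ?_⟩
      rw [show (cI : Finset (ZMod n)) = (I : Finset (ZMod n))ᶜ from rfl]
      simp only [Finset.mem_compl]
      exact ⟨hm1I, hmp1I, by simpa using hmI, by simpa using hmpI⟩
    have hKerase : K = (Finset.univ.filter (fun A : DivIdx n =>
        m - 1 ∈ A.val ∧ m + (p : ZMod n) + 1 ∈ A.val ∧ m ∉ A.val ∧ m + (p : ZMod n) ∉ A.val)).erase cI := by
      rw [hKdef]
      ext A
      simp only [Finset.mem_filter, Finset.mem_erase, Finset.mem_univ, true_and]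
      have : (A ≠ cI) ↔ A.val ≠ (I : Finset (ZMod n))ᶜ := by
        rw [← hcIval]; exact not_congr Subtype.ext_iff
      tauto
    have hT1sum : (∑ A ∈ Finset.univ.filter (fun A : DivIdx n =>
          m - 1 ∈ A.val ∧ m + (p : ZMod n) + 1 ∈ A.val ∧ m ∉ A.val ∧ m + (p : ZMod n) ∉ A.val),
          FreeAbelianGroup.of A)
        = FreeAbelianGroup.of cI + ∑ A ∈ K, FreeAbelianGroup.of A := by
      rw [hKerase, Finset.add_sum_erase _ _ hcImem]
    have key : FreeAbelianGroup.of I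
          - (∑ A ∈ L, FreeAbelianGroup.of A - ∑ A ∈ K, FreeAbelianGroup.of A)
        = (FreeAbelianGroup.of I - FreeAbelianGroup.of cI)
          - keelElt n hn (m - 1) (m + (p : ZMod n)) m (m + (p : ZMod n) + 1)
          + keelElt n hn (m - 1) (m + (p : ZMod n) + 1) m (m + (p : ZMod n)) := by
      simp only [keelElt]
      rw [hT2S2, hT1sum, hLdef]
      abel
    rw [key]
    exact AddSubgroup.add_mem _ (AddSubgroup.sub_mem _ hsub1 hkeel1) hkeel2
  · intro A hA
    rw [Finset.mem_union, hLdef, hKdef, Finset.mem_filter, Finset.mem_filter] at hA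
    rcases hA with ⟨-, h1, h2, h3, h4⟩ | ⟨-, h1, h2, h3, h4, h5⟩
    · exact not_cyc_L hn hp1 hp2 m A h1 h2 h3 h4
    · exact not_cyc_K hn hp1 hp2 m A I hI h1 h2 h3 h4 h5
end

section
/- Fix n ≥ 4. Let F' be the free abelian group on the set {A ⊆ ZMod n : 0 ∈ A, 2 ≤ |A| ≤ n−2} with generators δ_A, and for a subset X ⊆ ZMod n with 2 ≤ |X| ≤ n−2 write X* for the unique member of {X, X^c} containing 0. Let R' ≤ F' be the subgroup generated by the elements r_{m,p} = δ_{I*} − Σ_{A ∈ L} δ_{A*} + Σ_{A ∈ K} δ_{A*}, for each m ∈ ZMod n and 1 ≤ p ≤ n−3, where I = {m, m+1, …, m+p}, L = {A ⊆ ZMod n : 2 ≤ |A| ≤ n−2, m−1 ∈ A, m+p ∈ A, m ∉ A, m+p+1 ∉ A} and K = {A ⊆ ZMod n : 2 ≤ |A| ≤ n−2, m−1 ∈ A, m+p+1 ∈ A, m ∉ A, m+p ∉ A, A ≠ I^c}. Then the natural group homomorphism F'/R' → G(n) sending the class of δ_A to the class of δ_A in the Keel presentation group G(n) is an isomorphism.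 -/
open scoped Classical

/-- The index set of generators of `F'`: subsets `A ⊆ ZMod n` with `0 ∈ A` and
`2 ≤ |A| ≤ n−2`. -/
abbrev D0Idx (n : ℕ) := {A : Finset (ZMod n) //
  (0 : ZMod n) ∈ A ∧ 2 ≤ A.card ∧ A.card ≤ n - 2}

/-- For `X ⊆ ZMod n` with `2 ≤ |X| ≤ n−2`, `X*` is the unique member of `{X, Xᶜ}`
containing `0`, as an element of `D0Idx n`. -/
noncomputable def starIdx (n : ℕ) (hn : 4 ≤ n) (X : Finset (ZMod n))
    (h : 2 ≤ X.card ∧ X.card ≤ n - 2) : D0Idx n :=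
  haveI : NeZero n := ⟨by omega⟩
  if h0 : (0 : ZMod n) ∈ X then ⟨X, h0, h⟩
  else
    ⟨Xᶜ, by
      have hc : Xᶜ.card = n - X.card := by rw [Finset.card_compl, ZMod.card]
      exact ⟨Finset.mem_compl.mpr h0, by omega, by omega⟩⟩

/-- The cyclic interval `{m, m+1, …, m+p}` has `p+1` elements when `p ≤ n−3`. -/
lemma interval_card (n : ℕ) (hn : 4 ≤ n) (m : ZMod n) (p : ℕ) (hp2 : p ≤ n - 3) :
    ((Finset.range (p + 1)).image (fun i : ℕ => m + (i : ZMod n))).card = p + 1 := by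
  rw [Finset.card_image_of_injOn, Finset.card_range]
  intro i hi j hj hij
  simp only [Finset.coe_range, Set.mem_Iio] at hi hj
  have hc : (i : ZMod n) = (j : ZMod n) := add_left_cancel hij
  have hmod : i % n = j % n := (ZMod.natCast_eq_natCast_iff i j n).mp hc
  rw [Nat.mod_eq_of_lt (by omega), Nat.mod_eq_of_lt (by omega)] at hmod
  exact hmod

/-- The relation element `r_{m,p} = δ_{I*} − Σ_{A ∈ L} δ_{A*} + Σ_{A ∈ K} δ_{A*}`
in `F'`, for `I = {m, …, m+p}`,
`L = {A : 2 ≤ |A| ≤ n−2, m−1 ∈ A, m+p ∈ A, m ∉ A, m+p+1 ∉ A}` and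
`K = {A : 2 ≤ |A| ≤ n−2, m−1 ∈ A, m+p+1 ∈ A, m ∉ A, m+p ∉ A, A ≠ Iᶜ}`. -/
noncomputable def relElt (n : ℕ) (hn : 4 ≤ n) (m : ZMod n) (p : ℕ)
    (hp1 : 1 ≤ p) (hp2 : p ≤ n - 3) : FreeAbelianGroup (D0Idx n) :=
  haveI : NeZero n := ⟨by omega⟩
  FreeAbelianGroup.of (starIdx n hn
      ((Finset.range (p + 1)).image (fun i : ℕ => m + (i : ZMod n)))
      (by rw [interval_card n hn m p hp2]; omega))
  - (∑ A ∈ Finset.univ.filter (fun A : DivIdx n =>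
        m - 1 ∈ A.val ∧ m + (p : ZMod n) ∈ A.val ∧ m ∉ A.val ∧
          m + (p : ZMod n) + 1 ∉ A.val),
      FreeAbelianGroup.of (starIdx n hn A.val A.prop))
  + (∑ A ∈ Finset.univ.filter (fun A : DivIdx n =>
        m - 1 ∈ A.val ∧ m + (p : ZMod n) + 1 ∈ A.val ∧ m ∉ A.val ∧
          m + (p : ZMod n) ∉ A.val ∧
          A.val ≠ ((Finset.range (p + 1)).image (fun i : ℕ => m + (i : ZMod n)))ᶜ),
      FreeAbelianGroup.of (starIdx n hn A.val A.prop))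

/-- The subgroup `R' ≤ F'` generated by the relation elements `r_{m,p}`. -/
noncomputable def NewRelations (n : ℕ) (hn : 4 ≤ n) :
    AddSubgroup (FreeAbelianGroup (D0Idx n)) :=
  AddSubgroup.closure
    {x | ∃ (m : ZMod n) (p : ℕ) (hp1 : 1 ≤ p) (hp2 : p ≤ n - 3),
      x = relElt n hn m p hp1 hp2}

/-!
Sending `δ_A` to `δ_{A*}` identifies `F` modulo the relations `δ_A = δ_{Aᶜ}` with `F'`, so it
suffices to show that the image of the Keel relations in `F'` is `R'`. On the one hand,
`r_{m,p}` is the image of the difference of the Keel relations for `(m-1, m+p+1, m, m+p)` and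
`(m-1, m+p, m, m+p+1)`. On the other hand, an element of `F'` is determined by its coefficients,
which are functions on the generators `C`. In these coordinates the Keel relation for
`i, j, k, l` becomes `(χ_i - χ_l) (χ_j - χ_k)`, where `χ_x C` is `1` if `x ∈ C` and `0`
otherwise, and `r_{m,p}` becomes `-e_{m-1} e_{m+p}` with `e_x = χ_{x+1} - χ_x`. Telescoping
each `χ_y - χ_x` along the cycle into steps `e` writes every Keel product as a combination of
the `e_x e_y` with `x, y` at cyclic distance between `2` and `n - 2`.
-/

theorem QuotientAddGroup.exists_addEquiv_of_rightInverse {G H : Type*} [AddGroup G] [AddGroup H]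
    {N : AddSubgroup G} {M : AddSubgroup H} [N.Normal] [M.Normal] (f : G →+ H) (s : H →+ G)
    (hfs : Function.RightInverse s f) (hker : f.ker ≤ N) (hM : N.map f = M) :
    ∃ e : H ⧸ M ≃+ G ⧸ N, ∀ h : H, e h = s h := by
  subst hM
  have hsf : ∀ x : G, (s (f x) : G ⧸ N) = x := fun x =>
    QuotientAddGroup.eq.mpr (hker (by simp [hfs (f x)]))
  refine ⟨AddMonoidHom.toAddEquiv
    (QuotientAddGroup.lift _ ((mk' N).comp s) ?_) (map N _ f (AddSubgroup.le_comap_map f N))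
    ?_ ?_, fun _ => rfl⟩
  · rintro _ ⟨x, hx, rfl⟩
    simpa [hsf] using hx
  · ext h
    simp [hfs h]
  · ext x
    simp [hsf]

lemma ZMod.exists_eq_add_natCast_of_ne {n : ℕ} [NeZero n] {i j : ZMod n} (h : i ≠ j) :
    ∃ a : ℕ, 0 < a ∧ a < n ∧ j = i + a :=
  ⟨(j - i).val, ZMod.val_pos.mpr (sub_ne_zero.mpr h.symm), ZMod.val_lt _, by simp⟩

lemma ZMod.add_natCast_ne_add_natCast {n : ℕ} (x : ZMod n) {a b : ℕ} (hab : a ≠ b) (ha : a < n)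
    (hb : b < n) : x + a ≠ x + b := fun h => by
  have := congrArg ZMod.val (add_left_cancel h)
  rw [ZMod.val_cast_of_lt ha, ZMod.val_cast_of_lt hb] at this
  exact hab this

section StepProducts

variable {R : Type*} [CommRing R] {n : ℕ} (χ : ZMod n → R)

def stepProductSpan : AddSubgroup R :=
  AddSubgroup.closure {y | ∃ (x : ZMod n) (d : ℕ), 2 ≤ d ∧ d ≤ n - 2 ∧
    y = (χ (x + 1) - χ x) * (χ (x + d + 1) - χ (x + d))}

lemma sub_eq_sum_Ico_sub (i : ZMod n) {s t : ℕ} (hst : s ≤ t) :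
    χ (i + t) - χ (i + s) = ∑ a ∈ Finset.Ico s t, (χ (i + a + 1) - χ (i + a)) := by
  rw [← Finset.sum_Ico_sub (fun a : ℕ => χ (i + a)) hst]
  push_cast [add_assoc]
  rfl

lemma sub_mul_sub_mem_stepProductSpan_of_separated (i : ZMod n) {s t u v : ℕ} (hst : s ≤ t)
    (htu : t < u) (huv : u ≤ v) (hv : v < s + n) :
    (χ (i + t) - χ (i + s)) * (χ (i + v) - χ (i + u)) ∈ stepProductSpan χ := by
  rw [sub_eq_sum_Ico_sub χ i hst, sub_eq_sum_Ico_sub χ i huv, Finset.sum_mul_sum]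
  refine AddSubgroup.sum_mem _ fun a ha => AddSubgroup.sum_mem _ fun b hb => ?_
  rw [Finset.mem_Ico] at ha hb
  refine AddSubgroup.subset_closure ⟨i + a, b - a, by omega, by omega, ?_⟩
  rw [Nat.cast_sub (by omega), add_add_sub_cancel]

lemma sub_mul_sub_mem_stepProductSpan_of_lt (i : ZMod n) {a b c : ℕ} (ha : 0 < a) (hab : a < b)
    (hb : b < n) (hc : c < n) (hca : c ≠ a) (hcb : c ≠ b) :
    (χ i - χ (i + c)) * (χ (i + a) - χ (i + b)) ∈ stepProductSpan χ := by
  have hsep {s t u v : ℕ} := @sub_mul_sub_mem_stepProductSpan_of_separated _ _ _ χ i s t u v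
  rcases lt_trichotomy c a with hca' | rfl | hac
  · have h := hsep (s := 0) (t := c) (u := a) (v := b) (by omega) hca' hab.le (by omega)
    rw [Nat.cast_zero, add_zero] at h
    convert h using 1
    ring
  · omega
  rcases lt_or_gt_of_ne hcb with hcb' | hbc
  -- the crossing pairing is the difference of the two non-crossing ones
  · have h₁ := hsep (s := 0) (t := a) (u := c) (v := b) (by omega) hac hcb'.le (by omega)
    have h₂ := hsep (s := a) (t := c) (u := b) (v := n) hac.le hcb' hb.le (by omega)
    rw [Nat.cast_zero, add_zero] at h₁
    rw [ZMod.natCast_self, add_zero] at h₂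
    convert sub_mem h₁ h₂ using 1
    ring
  · have h := hsep (s := a) (t := b) (u := c) (v := n) hab.le hbc hc.le (by omega)
    rw [ZMod.natCast_self, add_zero] at h
    convert neg_mem h using 1
    ring

theorem sub_mul_sub_mem_stepProductSpan_of_pairwise_ne [NeZero n] {i j k l : ZMod n}
    (hij : i ≠ j) (hik : i ≠ k) (hil : i ≠ l) (hjk : j ≠ k) (hjl : j ≠ l) (hkl : k ≠ l) :
    (χ i - χ l) * (χ j - χ k) ∈ stepProductSpan χ := by
  obtain ⟨a, ha, han, rfl⟩ := ZMod.exists_eq_add_natCast_of_ne hij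
  obtain ⟨b, hb, hbn, rfl⟩ := ZMod.exists_eq_add_natCast_of_ne hik
  obtain ⟨c, -, hcn, rfl⟩ := ZMod.exists_eq_add_natCast_of_ne hil
  rcases lt_or_gt_of_ne (show a ≠ b by rintro rfl; exact hjk rfl) with hab | hba
  · exact sub_mul_sub_mem_stepProductSpan_of_lt χ i ha hab hbn hcn (by rintro rfl; exact hjl rfl)
      (by rintro rfl; exact hkl rfl)
  · convert neg_mem (sub_mul_sub_mem_stepProductSpan_of_lt χ i hb hba han hcn
      (by rintro rfl; exact hkl rfl) (by rintro rfl; exact hjl rfl)) using 1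
    ring

end StepProducts

namespace FreeAbelianGroup

noncomputable def coeffHom (X : Type*) : FreeAbelianGroup X →+ (X → ℤ) :=
  Finsupp.coeFnAddHom.comp toFinsupp

lemma coeffHom_injective (X : Type*) : Function.Injective (coeffHom X) :=
  DFunLike.coe_injective.comp (equivFinsupp X).injective

lemma coeffHom_of {X : Type*} (a b : X) : coeffHom X (of a) b = if a = b then 1 else 0 := by
  classical
  simp [coeffHom, Finsupp.single_apply]

lemma coeffHom_sum_of {X : Type*} (s : Finset X) (b : X) :
    coeffHom X (∑ a ∈ s, of a) b = if b ∈ s then 1 else 0 := by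
  classical
  simp [coeffHom_of]

end FreeAbelianGroup

section Presentations

open FreeAbelianGroup

variable {n : ℕ}

def toDivIdx (A : D0Idx n) : DivIdx n := ⟨A.1, A.2.2⟩

lemma starIdx_of_zero_mem (hn : 4 ≤ n) {X : Finset (ZMod n)} (h : 2 ≤ X.card ∧ X.card ≤ n - 2)
    (h0 : (0 : ZMod n) ∈ X) : starIdx n hn X h = ⟨X, h0, h⟩ :=
  dif_pos h0

lemma toDivIdx_starIdx_of_zero_notMem (hn : 4 ≤ n) (A : DivIdx n) (h0 : (0 : ZMod n) ∉ A.1) :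
    toDivIdx (starIdx n hn A.1 A.2) = complIdx n hn A := by
  rw [starIdx, dif_neg h0]
  rfl

lemma starIdx_compl (hn : 4 ≤ n) (A : DivIdx n) :
    starIdx n hn (complIdx n hn A).1 (complIdx n hn A).2 = starIdx n hn A.1 A.2 := by
  have : NeZero n := ⟨by omega⟩
  by_cases h0 : (0 : ZMod n) ∈ A.1
  · rw [starIdx, dif_neg (by simpa [complIdx] using h0), starIdx_of_zero_mem hn _ h0]
    exact Subtype.ext (compl_compl _)
  · rw [starIdx_of_zero_mem hn _ (by simpa [complIdx] using h0), starIdx, dif_neg h0]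
    rfl

lemma toDivIdx_ne_complIdx (hn : 4 ≤ n) (C : D0Idx n) : toDivIdx C ≠ complIdx n hn (toDivIdx C) :=
  fun h => by
    have : NeZero n := ⟨by omega⟩
    have h0 : (0 : ZMod n) ∈ (complIdx n hn (toDivIdx C)).1 := h ▸ C.2.1
    simp [complIdx, toDivIdx, C.2.1] at h0

lemma starIdx_eq_iff (hn : 4 ≤ n) (A : DivIdx n) (C : D0Idx n) :
    starIdx n hn A.1 A.2 = C ↔ A = toDivIdx C ∨ A = complIdx n hn (toDivIdx C) := by
  have : NeZero n := ⟨by omega⟩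
  have hC := C.2.1
  rw [starIdx]
  split_ifs with h0 <;> simp only [Subtype.ext_iff, toDivIdx, complIdx]
  · refine ⟨Or.inl, fun h => h.resolve_right fun h' => ?_⟩
    simp [h', hC] at h0
  · rw [compl_eq_comm, eq_comm (a := (C : Finset (ZMod n))ᶜ)]
    refine ⟨Or.inr, fun h => h.resolve_left fun h' => ?_⟩
    exact h0 (h' ▸ hC)

noncomputable def starHom (n : ℕ) (hn : 4 ≤ n) :
    FreeAbelianGroup (DivIdx n) →+ FreeAbelianGroup (D0Idx n) :=
  map fun A => starIdx n hn A.1 A.2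

noncomputable def inclHom (n : ℕ) : FreeAbelianGroup (D0Idx n) →+ FreeAbelianGroup (DivIdx n) :=
  map toDivIdx

lemma starHom_inclHom (hn : 4 ≤ n) : Function.RightInverse (inclHom n) (starHom n hn) := by
  intro x
  rw [inclHom, starHom, ← map_comp_apply]
  convert map_id_apply x
  ext A
  simp [toDivIdx, starIdx_of_zero_mem hn _ A.2.1]

lemma sub_inclHom_starHom_mem (hn : 4 ≤ n) (x : FreeAbelianGroup (DivIdx n)) :
    x - inclHom n (starHom n hn x) ∈ KeelRelations n hn := by
  induction x using FreeAbelianGroup.induction_on with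
  | zero => simp
  | of A =>
    rw [inclHom, starHom, map_of_apply, map_of_apply]
    by_cases h0 : (0 : ZMod n) ∈ A.1
    · simp [starIdx_of_zero_mem hn _ h0, toDivIdx]
    · rw [toDivIdx_starIdx_of_zero_notMem hn A h0]
      exact AddSubgroup.subset_closure (Or.inl ⟨A, rfl⟩)
  | neg x hx => simpa [neg_add_eq_sub] using neg_mem hx
  | add x y hx hy =>
    convert add_mem hx hy using 1
    simp only [map_add]
    abel

lemma ker_starHom_le (hn : 4 ≤ n) : (starHom n hn).ker ≤ KeelRelations n hn := fun x hx => by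
  simpa [(starHom n hn).mem_ker.mp hx] using sub_inclHom_starHom_mem hn x

lemma coeffHom_starHom (hn : 4 ≤ n) (x : FreeAbelianGroup (DivIdx n)) (C : D0Idx n) :
    coeffHom _ (starHom n hn x) C
      = coeffHom _ x (toDivIdx C) + coeffHom _ x (complIdx n hn (toDivIdx C)) := by
  induction x using FreeAbelianGroup.induction_on with
  | zero => simp
  | of A =>
    rw [starHom, map_of_apply, coeffHom_of, coeffHom_of, coeffHom_of, starIdx_eq_iff]
    have := toDivIdx_ne_complIdx hn C
    by_cases h : A = toDivIdx C <;> simp_all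
  | neg x hx => simp only [map_neg, Pi.neg_apply, hx, neg_add]
  | add x y hx hy => simp only [map_add, Pi.add_apply, hx, hy, add_add_add_comm]

def memIndicator (x : ZMod n) : D0Idx n → ℤ := fun C => if x ∈ C.1 then 1 else 0

lemma coeffHom_starHom_keelElt (hn : 4 ≤ n) (i j k l : ZMod n) :
    coeffHom _ (starHom n hn (keelElt n hn i j k l))
      = (memIndicator i - memIndicator l) * (memIndicator j - memIndicator k) := by
  have : NeZero n := ⟨by omega⟩
  ext C
  simp only [keelElt, map_sub, Pi.sub_apply, coeffHom_starHom, coeffHom_sum_of]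
  by_cases hi : i ∈ C.1 <;> by_cases hj : j ∈ C.1 <;> by_cases hk : k ∈ C.1 <;>
    by_cases hl : l ∈ C.1 <;> simp [memIndicator, toDivIdx, complIdx, hi, hj, hk, hl]

lemma add_natCast_mem_interval_iff (m : ZMod n) {p c : ℕ} (hc : c < n) :
    m + c ∈ (Finset.range (p + 1)).image (fun i : ℕ => m + (i : ZMod n)) ↔ c ≤ p := by
  simp only [Finset.mem_image, Finset.mem_range]
  constructor
  · rintro ⟨i, hi, h⟩
    by_contra hcp
    exact m.add_natCast_ne_add_natCast (a := i) (b := c) (by omega) (by omega) hc h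
  · exact fun hcp => ⟨c, by omega, rfl⟩

lemma keelElt_mem (hn : 4 ≤ n) {i j k l : ZMod n} (hij : i ≠ j) (hik : i ≠ k) (hil : i ≠ l)
    (hjk : j ≠ k) (hjl : j ≠ l) (hkl : k ≠ l) : keelElt n hn i j k l ∈ KeelRelations n hn :=
  AddSubgroup.subset_closure (Or.inr ⟨i, j, k, l, hij, hik, hil, hjk, hjl, hkl, rfl⟩)

lemma relElt_eq_starHom (hn : 4 ≤ n) (m : ZMod n) (p : ℕ) (hp1 : 1 ≤ p) (hp2 : p ≤ n - 3) :
    relElt n hn m p hp1 hp2 = starHom n hn (keelElt n hn (m - 1) (m + p + 1) m (m + p) -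
      keelElt n hn (m - 1) (m + p) m (m + p + 1)) := by
  have : NeZero n := ⟨by omega⟩
  set I := (Finset.range (p + 1)).image (fun i : ℕ => m + (i : ZMod n))
  have hIcard : 2 ≤ I.card ∧ I.card ≤ n - 2 := by rw [interval_card n hn m p hp2]; omega
  have hmem (c : ℕ) (hc : c < n) := add_natCast_mem_interval_iff m (p := p) hc
  have hm : m ∈ I := by
    have h := (hmem 0 (by omega)).mpr (by omega)
    rwa [Nat.cast_zero, add_zero] at h
  have hmp : m + p ∈ I := (hmem p (by omega)).mpr le_rfl
  have hm1 : m - 1 ∉ I := by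
    have h := (hmem (n - 1) (by omega)).not.mpr (by omega)
    rwa [Nat.cast_sub (by omega), ZMod.natCast_self, Nat.cast_one, zero_sub,
      ← sub_eq_add_neg] at h
  have hmp1 : m + p + 1 ∉ I := by
    have h := (hmem (p + 1) (by omega)).not.mpr (by omega)
    rwa [Nat.cast_succ, ← add_assoc] at h
  set Ic := complIdx n hn ⟨I, hIcard⟩
  have hIc : Ic ∈ Finset.univ.filter (fun A : DivIdx n =>
      m - 1 ∈ A.1 ∧ m + p + 1 ∈ A.1 ∧ m ∉ A.1 ∧ m + p ∉ A.1) := by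
    simp [Ic, complIdx, hm, hmp, hm1, hmp1]
  have hK : Finset.univ.filter (fun A : DivIdx n =>
      m - 1 ∈ A.1 ∧ m + p + 1 ∈ A.1 ∧ m ∉ A.1 ∧ m + p ∉ A.1 ∧ A.1 ≠ Iᶜ) =
      (Finset.univ.filter (fun A : DivIdx n =>
        m - 1 ∈ A.1 ∧ m + p + 1 ∈ A.1 ∧ m ∉ A.1 ∧ m + p ∉ A.1)).erase Ic := by
    ext A
    simp only [ne_eq, Finset.mem_erase, Finset.mem_filter, Finset.mem_univ, true_and, Ic, complIdx,
      Subtype.ext_iff]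
    tauto
  have hM : Finset.univ.filter (fun A : DivIdx n =>
      m - 1 ∈ A.1 ∧ m ∈ A.1 ∧ m + p ∉ A.1 ∧ m + p + 1 ∉ A.1) =
      Finset.univ.filter (fun A : DivIdx n =>
        m - 1 ∈ A.1 ∧ m ∈ A.1 ∧ m + p + 1 ∉ A.1 ∧ m + p ∉ A.1) :=
    Finset.filter_congr fun A _ => by tauto
  -- the term `A = Iᶜ` excluded from `K` is what cancels `δ_{I*}`
  have hstar : starIdx n hn I hIcard = starIdx n hn Ic.1 Ic.2 :=
    (starIdx_compl hn ⟨I, hIcard⟩).symm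
  simp only [relElt, keelElt, map_sub, map_sum, starHom, map_of_apply]
  rw [hK, Finset.sum_erase_eq_sub hIc, hM, hstar]
  abel

lemma stepProductSpan_le_map_coeffHom (hn : 4 ≤ n) :
    stepProductSpan (memIndicator (n := n)) ≤ (NewRelations n hn).map (coeffHom _) := by
  rw [stepProductSpan, AddSubgroup.closure_le]
  rintro _ ⟨x, d, hd2, hdn, rfl⟩
  refine ⟨-relElt n hn (x + 1) (d - 1) (by omega) (by omega),
    neg_mem (AddSubgroup.subset_closure ⟨_, _, _, _, rfl⟩), ?_⟩
  have hxd : x + 1 + ((d - 1 : ℕ) : ZMod n) = x + d := by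
    rw [Nat.cast_sub (by omega)]
    ring
  rw [map_neg, relElt_eq_starHom, map_sub, map_sub, coeffHom_starHom_keelElt,
    coeffHom_starHom_keelElt, add_sub_cancel_right, hxd]
  ring

lemma starHom_keelElt_mem (hn : 4 ≤ n) {i j k l : ZMod n} (hij : i ≠ j) (hik : i ≠ k)
    (hil : i ≠ l) (hjk : j ≠ k) (hjl : j ≠ l) (hkl : k ≠ l) :
    starHom n hn (keelElt n hn i j k l) ∈ NewRelations n hn := by
  have : NeZero n := ⟨by omega⟩
  rw [← AddSubgroup.mem_map_iff_mem (coeffHom_injective _), coeffHom_starHom_keelElt]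
  exact stepProductSpan_le_map_coeffHom hn
    (sub_mul_sub_mem_stepProductSpan_of_pairwise_ne memIndicator hij hik hil hjk hjl hkl)

lemma relElt_mem_map (hn : 4 ≤ n) (m : ZMod n) (p : ℕ) (hp1 : 1 ≤ p) (hp2 : p ≤ n - 3) :
    relElt n hn m p hp1 hp2 ∈ (KeelRelations n hn).map (starHom n hn) := by
  have hne (a b : ℕ) (hab : a < b) (hb : b < n) (y z : ZMod n) (hy : y = m - 1 + a)
      (hz : z = m - 1 + b) : y ≠ z :=
    hy ▸ hz ▸ (m - 1).add_natCast_ne_add_natCast hab.ne (by omega) hb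
  have d01 := hne 0 1 (by omega) (by omega) (m - 1) m (by simp) (by simp)
  have d02 := hne 0 (p + 1) (by omega) (by omega) (m - 1) (m + p) (by simp) (by push_cast; ring)
  have d03 := hne 0 (p + 2) (by omega) (by omega) (m - 1) (m + p + 1) (by simp)
    (by push_cast; ring)
  have d12 := hne 1 (p + 1) (by omega) (by omega) m (m + p) (by simp) (by push_cast; ring)
  have d13 := hne 1 (p + 2) (by omega) (by omega) m (m + p + 1) (by simp) (by push_cast; ring)
  have d23 := hne (p + 1) (p + 2) (by omega) (by omega) (m + p) (m + p + 1) (by push_cast; ring)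
    (by push_cast; ring)
  rw [relElt_eq_starHom]
  exact AddSubgroup.mem_map_of_mem _ (sub_mem
    (keelElt_mem hn d03 d01 d02 d13.symm d23.symm d12)
    (keelElt_mem hn d02 d01 d03 d12.symm d23 d13))

theorem map_starHom_keelRelations (hn : 4 ≤ n) :
    (KeelRelations n hn).map (starHom n hn) = NewRelations n hn := by
  apply le_antisymm
  · rw [KeelRelations, AddMonoidHom.map_closure, AddSubgroup.closure_le]
    rintro _ ⟨x, ⟨A, rfl⟩ | ⟨i, j, k, l, hij, hik, hil, hjk, hjl, hkl, rfl⟩, rfl⟩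
    · simp [starHom, starIdx_compl]
    · exact starHom_keelElt_mem hn hij hik hil hjk hjl hkl
  · rw [NewRelations, AddSubgroup.closure_le]
    rintro _ ⟨m, p, hp1, hp2, rfl⟩
    exact relElt_mem_map hn m p hp1 hp2

end Presentations

/-- the natural group homomorphism `F'/R' → G(n)`, sending the class of
`δ_A` to the class of `δ_A` in the Keel presentation group `G(n)`, is an isomorphism. -/
theorem new_presentation_iso (n : ℕ) (hn : 4 ≤ n) :
    ∃ f : (FreeAbelianGroup (D0Idx n) ⧸ NewRelations n hn) ≃+ KeelGroup n hn,
      ∀ A : D0Idx n,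
        f (QuotientAddGroup.mk (FreeAbelianGroup.of A)) =
          QuotientAddGroup.mk (FreeAbelianGroup.of (⟨A.val, A.prop.2⟩ : DivIdx n)) := by
  obtain ⟨e, he⟩ := QuotientAddGroup.exists_addEquiv_of_rightInverse (starHom n hn) (inclHom n)
    (starHom_inclHom hn) (ker_starHom_le hn) (map_starHom_keelRelations hn)
  exact ⟨e, fun A => by rw [he, inclHom, FreeAbelianGroup.map_of_apply]; rfl⟩
end

section
/- Fix n ≥ 4. Let F' be the free abelian group on the set {A ⊆ ZMod n : 0 ∈ A, 2 ≤ |A| ≤ n−2} with generators δ_A, and let R' ≤ F' be the subgroup generated by the elements r_{m,p} described below, for each m ∈ ZMod n and 1 ≤ p ≤ n−3. Then F'/R' is a free abelian group, and the images of the generators δ_A with A non-adjacent form a ℤ-basis; in particular F'/R' has rank 2^(n−1) − 1 − n(n−1)/2. -/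
open scoped Classical

/-- Non-adjacent subsets of `ZMod n` containing `0`. -/
abbrev NAIdx (n : ℕ) := {A : Finset (ZMod n) //
  (0 : ZMod n) ∈ A ∧ 2 ≤ A.card ∧ A.card ≤ n - 2 ∧ ¬ IsCyclicInterval A}

/-!
Each relation `r_{m,p}` reads `δ_{I*} = Σ_{A ∈ L} δ_{A*} − Σ_{A ∈ K} δ_{A*}`, where
`I = {m, …, m+p}` is a cyclic interval while every `A ∈ L ∪ K` is non-adjacent: a cyclic interval
has only one right end, which rules out `L`, and the only interval allowed by the conditions of
`K` is `Iᶜ`, which is excluded. Every adjacent generator is some `I*`, and the two relations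
attached to the same `I*`, namely `r_{m,p}` for `I` and `r_{m+p+1, n-p-2}` for `Iᶜ`, have the same
right-hand side: both have the same `L`, and complementation exchanges their `K`. So `R'` only
solves for the adjacent generators, and `F'/R'` is free on the non-adjacent ones.

For the rank, complementation pairs the non-adjacent sets containing `0` with those avoiding `0`;
among the `2^n − 2(n+1)` subsets of size in `[2, n−2]`, exactly `n(n−3)` are cyclic intervals.
-/

namespace FreeAbelianGroup

variable {α : Type*}

noncomputable def restrict (Q : α → Prop) :
    FreeAbelianGroup α →+ FreeAbelianGroup {a // Q a} :=
  lift fun a => if h : Q a then of ⟨a, h⟩ else 0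

lemma map_val_restrict_sum {Q : α → Prop} {ι : Type*} (s : Finset ι) (f : ι → α)
    (hf : ∀ i ∈ s, Q (f i)) :
    map Subtype.val (restrict Q (∑ i ∈ s, of (f i))) = ∑ i ∈ s, of (f i) := by
  simp only [map_sum]
  refine Finset.sum_congr rfl fun i hi => ?_
  rw [restrict, lift_apply_of, dif_pos (hf i hi), map_of_apply]

variable {P : α → Prop}

noncomputable def eliminate (t : {a // P a} → FreeAbelianGroup {a // ¬P a}) :
    FreeAbelianGroup α →+ FreeAbelianGroup {a // ¬P a} :=
  lift fun a => if h : P a then t ⟨a, h⟩ else of ⟨a, h⟩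

section Eliminate

variable (t : {a // P a} → FreeAbelianGroup {a // ¬P a})
  {R : AddSubgroup (FreeAbelianGroup α)}
  (hR : R = AddSubgroup.closure (Set.range fun a => of a.1 - map Subtype.val (t a)))

lemma eliminate_map_val (x : FreeAbelianGroup {a // ¬P a}) :
    eliminate t (map Subtype.val x) = x := by
  have h : (eliminate t).comp (map Subtype.val) = AddMonoidHom.id _ := by
    ext b
    simp [eliminate, b.2]
  exact DFunLike.congr_fun h x

include hR in
lemma le_ker_eliminate : R ≤ (eliminate t).ker := by
  rw [hR, AddSubgroup.closure_le]
  rintro _ ⟨a, rfl⟩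
  rw [SetLike.mem_coe, AddMonoidHom.mem_ker, map_sub, eliminate_map_val, eliminate,
    lift_apply_of, dif_pos a.2, sub_self]

include hR in
lemma mk_map_val_eliminate (x : FreeAbelianGroup α) :
    (QuotientAddGroup.mk (map Subtype.val (eliminate t x)) : FreeAbelianGroup α ⧸ R) =
      QuotientAddGroup.mk x := by
  have h : (QuotientAddGroup.mk' R).comp ((map Subtype.val).comp (eliminate t)) =
      QuotientAddGroup.mk' R := by
    ext a
    by_cases ha : P a
    · simp only [AddMonoidHom.comp_apply, eliminate, lift_apply_of, dif_pos ha,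
        QuotientAddGroup.mk'_apply, QuotientAddGroup.eq]
      rw [hR]
      exact AddSubgroup.subset_closure ⟨⟨a, ha⟩, (neg_add_eq_sub _ _).symm⟩
    · simp [eliminate, ha]
  exact DFunLike.congr_fun h x

noncomputable def eliminationEquiv :
    FreeAbelianGroup {a // ¬P a} ≃+ FreeAbelianGroup α ⧸ R where
  toFun x := QuotientAddGroup.mk (map Subtype.val x)
  invFun := QuotientAddGroup.lift R (eliminate t) (le_ker_eliminate t hR)
  left_inv x := by simp [eliminate_map_val]
  right_inv := by
    rintro ⟨x⟩
    exact mk_map_val_eliminate t hR x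
  map_add' := by simp

end Eliminate

theorem exists_basis_quotient_of_eliminating_relations {κ : Type*} (head : κ → {a // P a})
    (tail : κ → FreeAbelianGroup {a // ¬P a}) (hhead : Function.Surjective head)
    (htail : ∀ k k', head k = head k' → tail k = tail k')
    {R : AddSubgroup (FreeAbelianGroup α)}
    (hR : R = AddSubgroup.closure
      (Set.range fun k => of (head k).1 - map Subtype.val (tail k))) :
    ∃ b : Module.Basis {a // ¬P a} ℤ (FreeAbelianGroup α ⧸ R),
      ∀ a, b a = QuotientAddGroup.mk (of a.1) := by
  let t a := tail (hhead a).choose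
  have hRt : R = AddSubgroup.closure (Set.range fun a => of a.1 - map Subtype.val (t a)) := by
    rw [hR, ← hhead.range_comp]
    congr
    funext k
    simp only [Function.comp_apply, t, htail _ _ (hhead (head k)).choose_spec]
  refine ⟨(FreeAbelianGroup.basis _).map (eliminationEquiv t hRt).toIntLinearEquiv, fun a => ?_⟩
  simp [eliminationEquiv, FreeAbelianGroup.basis, Finsupp.toFreeAbelianGroup, Finsupp.liftAddHom]

end FreeAbelianGroup

lemma ZMod.natCast_ne_zero_of_pos_of_lt {n i : ℕ} (hi0 : 0 < i) (hi : i < n) :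
    (i : ZMod n) ≠ 0 := by
  rw [Ne, ZMod.natCast_eq_zero_iff]
  exact fun h => absurd (Nat.le_of_dvd hi0 h) (by omega)

open Finset

section CyclicInterval

variable {n : ℕ}

def cyclicInterval (a : ZMod n) (k : ℕ) : Finset (ZMod n) :=
  (range k).image fun i : ℕ => a + (i : ZMod n)

lemma isCyclicInterval_cyclicInterval (a : ZMod n) {k : ℕ} (hk : 1 ≤ k) :
    IsCyclicInterval (cyclicInterval a k) :=
  ⟨a, k, hk, rfl⟩

lemma mem_cyclicInterval {a x : ZMod n} {k : ℕ} :
    x ∈ cyclicInterval a k ↔ ∃ i < k, a + (i : ZMod n) = x := by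
  simp [cyclicInterval]

variable {a x : ZMod n} {k : ℕ}

lemma card_cyclicInterval (hk : k ≤ n) : #(cyclicInterval a k) = k := by
  rw [cyclicInterval, card_image_of_injOn, card_range]
  intro i hi j hj hij
  simp only [coe_range, Set.mem_Iio] at hi hj
  exact CharP.natCast_injOn_Iio (ZMod n) n (Set.mem_Iio.2 (by omega)) (Set.mem_Iio.2 (by omega))
    (add_left_cancel hij)

lemma mem_cyclicInterval_and_sub_one_notMem_iff (hk1 : 1 ≤ k) (hkn : k < n) :
    x ∈ cyclicInterval a k ∧ x - 1 ∉ cyclicInterval a k ↔ x = a := by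
  constructor
  · rintro ⟨hx, hx1⟩
    obtain ⟨i, hi, rfl⟩ := mem_cyclicInterval.1 hx
    obtain _ | i := i
    · simp
    · exact absurd (mem_cyclicInterval.2 ⟨i, by omega, by push_cast; ring⟩) hx1
  · rintro rfl
    refine ⟨mem_cyclicInterval.2 ⟨0, by omega, by simp⟩, fun h => ?_⟩
    obtain ⟨i, hi, hia⟩ := mem_cyclicInterval.1 h
    exact ZMod.natCast_ne_zero_of_pos_of_lt (n := n) (i := i + 1) (by omega) (by omega)
      (by push_cast; linear_combination hia)

lemma mem_cyclicInterval_and_add_one_notMem_iff (hk1 : 1 ≤ k) (hkn : k < n) :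
    x ∈ cyclicInterval a k ∧ x + 1 ∉ cyclicInterval a k ↔ x + 1 = a + k := by
  constructor
  · rintro ⟨hx, hx1⟩
    obtain ⟨i, hi, rfl⟩ := mem_cyclicInterval.1 hx
    by_cases hik : i + 1 < k
    · exact absurd (mem_cyclicInterval.2 ⟨i + 1, hik, by push_cast; ring⟩) hx1
    · rw [show k = i + 1 by omega, Nat.cast_succ, add_assoc]
  · intro hx
    refine ⟨mem_cyclicInterval.2 ⟨k - 1, by omega, ?_⟩, fun h => ?_⟩
    · rw [Nat.cast_sub hk1]
      linear_combination -hx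
    · obtain ⟨i, hi, hia⟩ := mem_cyclicInterval.1 h
      exact ZMod.natCast_ne_zero_of_pos_of_lt (n := n) (i := k - i) (by omega) (by omega)
        (by rw [Nat.cast_sub hi.le]; linear_combination -hx - hia)

lemma cyclicInterval_inj {a' : ZMod n} {k' : ℕ} (hk1 : 1 ≤ k) (hkn : k < n) (hkn' : k' < n)
    (h : cyclicInterval a k = cyclicInterval a' k') : a = a' ∧ k = k' := by
  have hk : k = k' := by
    simpa [card_cyclicInterval, hkn.le, hkn'.le] using congrArg card h
  subst hk
  refine ⟨(mem_cyclicInterval_and_sub_one_notMem_iff hk1 hkn).1 ?_, rfl⟩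
  rw [← h]
  exact (mem_cyclicInterval_and_sub_one_notMem_iff hk1 hkn).2 rfl

variable [NeZero n]

lemma cyclicInterval_eq_univ (hk : n ≤ k) : cyclicInterval a k = univ :=
  eq_univ_of_forall fun x => mem_cyclicInterval.2
    ⟨(x - a).val, (ZMod.val_lt _).trans_le hk, by rw [ZMod.natCast_zmod_val]; abel⟩

lemma compl_cyclicInterval (hk : k ≤ n) :
    (cyclicInterval a k)ᶜ = cyclicInterval (a + (k : ZMod n)) (n - k) := by
  refine (eq_of_subset_of_card_le (fun x hx => ?_) ?_).symm
  · obtain ⟨j, hj, rfl⟩ := mem_cyclicInterval.1 hx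
    rw [mem_compl, mem_cyclicInterval]
    rintro ⟨i, hi, hij⟩
    have := CharP.natCast_injOn_Iio (ZMod n) n (x₁ := i) (x₂ := k + j)
      (Set.mem_Iio.2 (by omega)) (Set.mem_Iio.2 (by omega)) (by push_cast; linear_combination hij)
    omega
  · rw [card_compl, ZMod.card, card_cyclicInterval hk, card_cyclicInterval (by omega)]

lemma IsCyclicInterval.exists_eq_cyclicInterval_card {A : Finset (ZMod n)}
    (hA : IsCyclicInterval A) (hcard : #A < n) : ∃ a, A = cyclicInterval a #A := by
  obtain ⟨a, k, -, hA⟩ := hA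
  replace hA : A = cyclicInterval a k := hA
  by_cases hk : k ≤ n
  · exact ⟨a, by rw [hA, card_cyclicInterval hk]⟩
  · rw [hA, cyclicInterval_eq_univ (by omega), card_univ, ZMod.card] at hcard
    omega

lemma IsCyclicInterval.compl {A : Finset (ZMod n)} (hA : IsCyclicInterval A)
    (hcard : #A < n) : IsCyclicInterval Aᶜ := by
  obtain ⟨a, ha⟩ := hA.exists_eq_cyclicInterval_card hcard
  rw [ha, compl_cyclicInterval (by omega)]
  exact isCyclicInterval_cyclicInterval _ (by omega)

variable {A : Finset (ZMod n)}

lemma IsCyclicInterval.eq_of_add_one_notMem (hA : IsCyclicInterval A) (hcard : #A < n)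
    {x y : ZMod n} (hx : x ∈ A) (hx1 : x + 1 ∉ A) (hy : y ∈ A) (hy1 : y + 1 ∉ A) :
    x = y := by
  obtain ⟨a, ha⟩ := hA.exists_eq_cyclicInterval_card hcard
  have hpos : 1 ≤ #A := card_pos.2 ⟨x, hx⟩
  rw [ha] at hx hx1 hy hy1
  have hx' := (mem_cyclicInterval_and_add_one_notMem_iff hpos hcard).1 ⟨hx, hx1⟩
  have hy' := (mem_cyclicInterval_and_add_one_notMem_iff hpos hcard).1 ⟨hy, hy1⟩
  exact add_right_cancel (hx'.trans hy'.symm)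

lemma IsCyclicInterval.eq_compl_cyclicInterval (hA : IsCyclicInterval A) (hcard : #A < n)
    {x y : ZMod n} {k : ℕ} (hk : k < n) (hx : x ∉ A) (hx1 : x - 1 ∈ A) (hy : y ∉ A)
    (hy1 : y + 1 ∈ A) (hxy : y + 1 = x + k) : A = (cyclicInterval x k)ᶜ := by
  have hcard' : #Aᶜ < n := by
    rw [card_compl, ZMod.card]
    have := card_pos.2 ⟨x - 1, hx1⟩
    omega
  have hpos : 1 ≤ #Aᶜ := card_pos.2 ⟨x, mem_compl.2 hx⟩
  obtain ⟨a, ha⟩ := (hA.compl hcard).exists_eq_cyclicInterval_card hcard'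
  have hxa : x = a := (mem_cyclicInterval_and_sub_one_notMem_iff hpos hcard').1 <| by
    rw [← ha, mem_compl, mem_compl, not_not]
    exact ⟨hx, hx1⟩
  have hya : y + 1 = a + #Aᶜ := (mem_cyclicInterval_and_add_one_notMem_iff hpos hcard').1 <| by
    rw [← ha, mem_compl, mem_compl, not_not]
    exact ⟨hy, hy1⟩
  have hkA : k = #Aᶜ := CharP.natCast_injOn_Iio (ZMod n) n hk hcard' <| by
    rw [← hxa] at hya
    exact add_left_cancel (hxy.symm.trans hya)
  rw [← compl_compl A, ha, hxa, hkA]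

end CyclicInterval

section Star

variable {n : ℕ} (hn : 4 ≤ n) [NeZero n] {X Y : Finset (ZMod n)}

lemma card_compl_bounds (h : 2 ≤ #X ∧ #X ≤ n - 2) : 2 ≤ #Xᶜ ∧ #Xᶜ ≤ n - 2 := by
  have := card_le_univ X
  rw [card_compl, ZMod.card]
  rw [ZMod.card] at this
  omega

lemma starIdx_val (h : 2 ≤ #X ∧ #X ≤ n - 2) :
    (starIdx n hn X h).val = if (0 : ZMod n) ∈ X then X else Xᶜ := by
  unfold starIdx
  split_ifs <;> rfl

lemma starIdx_compl_s13 (h : 2 ≤ #X ∧ #X ≤ n - 2) (h' : 2 ≤ #Xᶜ ∧ #Xᶜ ≤ n - 2) :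
    starIdx n hn Xᶜ h' = starIdx n hn X h := by
  apply Subtype.ext
  rw [starIdx_val, starIdx_val]
  by_cases h0 : (0 : ZMod n) ∈ X <;> simp [h0]

lemma eq_or_eq_compl_of_starIdx_eq {h : 2 ≤ #X ∧ #X ≤ n - 2} {h' : 2 ≤ #Y ∧ #Y ≤ n - 2}
    (hXY : starIdx n hn X h = starIdx n hn Y h') : X = Y ∨ X = Yᶜ := by
  have hv := congrArg Subtype.val hXY
  rw [starIdx_val, starIdx_val] at hv
  by_cases h0 : (0 : ZMod n) ∈ X <;> by_cases h0' : (0 : ZMod n) ∈ Y <;>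
    simp only [h0, h0', if_true, if_false] at hv
  · exact .inl hv
  · exact .inr hv
  · exact .inr (by rw [← hv, compl_compl])
  · exact .inl (compl_injective hv)

lemma isCyclicInterval_starIdx_iff (h : 2 ≤ #X ∧ #X ≤ n - 2) :
    IsCyclicInterval (starIdx n hn X h).val ↔ IsCyclicInterval X := by
  have hX : #X < n := by omega
  have hXc : #Xᶜ < n := by have := card_compl_bounds h; omega
  rw [starIdx_val]
  split_ifs
  · rfl
  · exact ⟨fun hc => compl_compl X ▸ hc.compl hXc, fun hc => hc.compl hX⟩

end Star

section Relations

variable (n : ℕ) (hn : 4 ≤ n) [NeZero n]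

def lFamily (m : ZMod n) (p : ℕ) : Finset (DivIdx n) :=
  univ.filter fun A => m - 1 ∈ A.val ∧ m + (p : ZMod n) ∈ A.val ∧ m ∉ A.val ∧
    m + (p : ZMod n) + 1 ∉ A.val

def kFamily (m : ZMod n) (p : ℕ) : Finset (DivIdx n) :=
  univ.filter fun A => m - 1 ∈ A.val ∧ m + (p : ZMod n) + 1 ∈ A.val ∧ m ∉ A.val ∧
    m + (p : ZMod n) ∉ A.val ∧ A.val ≠ (cyclicInterval m (p + 1))ᶜ

noncomputable def relTail (m : ZMod n) (p : ℕ) : FreeAbelianGroup (D0Idx n) :=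
  ∑ A ∈ lFamily n m p, FreeAbelianGroup.of (starIdx n hn A.val A.prop) -
    ∑ A ∈ kFamily n m p, FreeAbelianGroup.of (starIdx n hn A.val A.prop)

lemma relElt_eq (m : ZMod n) (p : ℕ) (hp1 : 1 ≤ p) (hp2 : p ≤ n - 3) :
    relElt n hn m p hp1 hp2 = FreeAbelianGroup.of (starIdx n hn (cyclicInterval m (p + 1))
      (by rw [card_cyclicInterval (by omega)]; omega)) - relTail n hn m p := by
  rw [relTail, sub_sub_eq_add_sub, add_sub_right_comm]
  rfl

variable {n} {m : ZMod n} {p p' : ℕ}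

lemma not_isCyclicInterval_of_mem_lFamily (hp1 : 1 ≤ p) (hp2 : p ≤ n - 3) {A : DivIdx n}
    (hA : A ∈ lFamily n m p) : ¬IsCyclicInterval A.val := by
  simp only [lFamily, mem_filter, mem_univ, true_and] at hA
  obtain ⟨h1, h2, h3, h4⟩ := hA
  have hcard : #A.val < n := by have := A.prop; omega
  intro hI
  have := hI.eq_of_add_one_notMem hcard h1 (by rwa [sub_add_cancel]) h2 h4
  exact ZMod.natCast_ne_zero_of_pos_of_lt (n := n) (i := p + 1) (by omega) (by omega)
    (by push_cast; linear_combination -this)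

lemma not_isCyclicInterval_of_mem_kFamily (hp2 : p ≤ n - 3) {A : DivIdx n}
    (hA : A ∈ kFamily n m p) : ¬IsCyclicInterval A.val := by
  simp only [kFamily, mem_filter, mem_univ, true_and] at hA
  obtain ⟨h1, h2, h3, h4, h5⟩ := hA
  exact fun hI => h5 <| hI.eq_compl_cyclicInterval (by have := A.prop; omega)
    (show p + 1 < n by omega) h3 h1 h4 h2 (by push_cast; ring)

omit [NeZero n] in
lemma add_add_one_add_eq_sub_one (hpp : p + p' + 2 = n) :
    m + p + 1 + p' = m - 1 := by
  have h : ((p + p' + 2 : ℕ) : ZMod n) = 0 := by rw [hpp, ZMod.natCast_self]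
  push_cast at h
  linear_combination h

lemma lFamily_symm (hpp : p + p' + 2 = n) : lFamily n (m + p + 1) p' = lFamily n m p := by
  have e := add_add_one_add_eq_sub_one (m := m) hpp
  refine filter_congr fun A _ => ?_
  rw [e, add_sub_cancel_right, sub_add_cancel]
  tauto

lemma compl_mem_kFamily_iff (hpp : p + p' + 2 = n) {A : DivIdx n} :
    complIdx n hn A ∈ kFamily n m p ↔ A ∈ kFamily n (m + p + 1) p' := by
  have e := add_add_one_add_eq_sub_one (m := m) hpp
  have hI : (cyclicInterval m (p + 1))ᶜ = cyclicInterval (m + (p : ZMod n) + 1) (p' + 1) := by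
    rw [compl_cyclicInterval (by omega), show n - (p + 1) = p' + 1 by omega]
    push_cast
    ring_nf
  have hne : (A.val)ᶜ ≠ cyclicInterval (m + (p : ZMod n) + 1) (p' + 1) ↔
      A.val ≠ (cyclicInterval (m + (p : ZMod n) + 1) (p' + 1))ᶜ :=
    not_congr ⟨fun h => by rw [← h, compl_compl], fun h => by rw [h, compl_compl]⟩
  simp only [kFamily, mem_filter, mem_univ, true_and, complIdx, mem_compl, not_not, hI, hne,
    e, add_sub_cancel_right, sub_add_cancel]
  tauto

lemma complIdx_complIdx (A : DivIdx n) : complIdx n hn (complIdx n hn A) = A :=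
  Subtype.ext (compl_compl _)

lemma relTail_symm (hpp : p + p' + 2 = n) :
    relTail n hn (m + p + 1) p' = relTail n hn m p := by
  rw [relTail, relTail, lFamily_symm hpp]
  congr 1
  refine sum_nbij' (complIdx n hn) (complIdx n hn) (fun A hA => ?_) (fun A hA => ?_)
    (fun A _ => complIdx_complIdx hn A) (fun A _ => complIdx_complIdx hn A)
    (fun A _ => congrArg _ (starIdx_compl_s13 hn _ _).symm)
  · exact (compl_mem_kFamily_iff hn hpp).2 hA
  · rw [← compl_mem_kFamily_iff hn hpp, complIdx_complIdx]
    exact hA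

lemma map_val_restrict_relTail (hp1 : 1 ≤ p) (hp2 : p ≤ n - 3) :
    FreeAbelianGroup.map Subtype.val
      (FreeAbelianGroup.restrict (fun A : D0Idx n => ¬IsCyclicInterval A.val)
        (relTail n hn m p)) = relTail n hn m p := by
  rw [relTail, map_sub, map_sub,
    FreeAbelianGroup.map_val_restrict_sum (Q := fun A : D0Idx n => ¬IsCyclicInterval A.val) _ _
      fun A hA => (isCyclicInterval_starIdx_iff hn _).not.2
      (not_isCyclicInterval_of_mem_lFamily hp1 hp2 hA),
    FreeAbelianGroup.map_val_restrict_sum (Q := fun A : D0Idx n => ¬IsCyclicInterval A.val) _ _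
      fun A hA => (isCyclicInterval_starIdx_iff hn _).not.2
      (not_isCyclicInterval_of_mem_kFamily hp2 hA)]

variable (n)

abbrev RelIdx := {mp : ZMod n × ℕ // 1 ≤ mp.2 ∧ mp.2 ≤ n - 3}

noncomputable def relHead (k : RelIdx n) : {A : D0Idx n // IsCyclicInterval A.val} :=
  ⟨starIdx n hn (cyclicInterval k.1.1 (k.1.2 + 1))
    (by rw [card_cyclicInterval (by omega)]; omega),
    (isCyclicInterval_starIdx_iff hn _).2 (isCyclicInterval_cyclicInterval _ (by omega))⟩

lemma relHead_surjective : Function.Surjective (relHead n hn) := by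
  rintro ⟨A, hA⟩
  have hcard := A.prop.2
  obtain ⟨a, ha⟩ := hA.exists_eq_cyclicInterval_card (by omega)
  refine ⟨⟨(a, #A.val - 1), by omega, by omega⟩, Subtype.ext (Subtype.ext ?_)⟩
  simp only [relHead]
  rw [starIdx_val, Nat.sub_add_cancel (by omega), ← ha, if_pos A.prop.1]

lemma relTail_eq_of_relHead_eq {k k' : RelIdx n} (h : relHead n hn k = relHead n hn k') :
    relTail n hn k.1.1 k.1.2 = relTail n hn k'.1.1 k'.1.2 := by
  obtain ⟨⟨m, p⟩, hp1, hp2⟩ := k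
  obtain ⟨⟨m', p'⟩, hp1', hp2'⟩ := k'
  simp only [relHead, Subtype.mk.injEq] at h hp1 hp2 hp1' hp2' ⊢
  rcases eq_or_eq_compl_of_starIdx_eq hn h with hI | hI
  · obtain ⟨rfl, hpp⟩ := cyclicInterval_inj (by omega) (by omega) (by omega) hI
    obtain rfl : p = p' := by omega
    rfl
  · rw [compl_cyclicInterval (by omega)] at hI
    obtain ⟨rfl, hpp⟩ := cyclicInterval_inj (by omega) (by omega) (by omega) hI
    rw [Nat.cast_succ, ← add_assoc]
    exact relTail_symm hn (by omega)

lemma newRelations_eq_closure : NewRelations n hn = AddSubgroup.closure (Set.range fun k =>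
    FreeAbelianGroup.of (relHead n hn k).1 - FreeAbelianGroup.map Subtype.val
      (FreeAbelianGroup.restrict (fun A : D0Idx n => ¬IsCyclicInterval A.val)
        (relTail n hn k.1.1 k.1.2))) := by
  rw [NewRelations]
  congr 1
  ext x
  constructor
  · rintro ⟨m, p, hp1, hp2, rfl⟩
    refine ⟨⟨(m, p), hp1, hp2⟩, ?_⟩
    dsimp only
    rw [map_val_restrict_relTail hn hp1 hp2, relElt_eq]
    rfl
  · rintro ⟨⟨⟨m, p⟩, hp1, hp2⟩, rfl⟩
    refine ⟨m, p, hp1, hp2, ?_⟩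
    dsimp only
    rw [map_val_restrict_relTail hn hp1 hp2, relElt_eq]
    rfl

end Relations

section Counting

variable {α : Type*} [Fintype α]

lemma card_filter_card_eq (k : ℕ) :
    #(univ.filter fun A : Finset α => #A = k) = (Fintype.card α).choose k := by
  rw [← powerset_univ, ← powersetCard_eq_filter, card_powersetCard, card_univ]

lemma card_filter_two_le_card_le (hα : 4 ≤ Fintype.card α) :
    #(univ.filter fun A : Finset α => 2 ≤ #A ∧ #A ≤ Fintype.card α - 2) +
      2 * (Fintype.card α + 1) = 2 ^ Fintype.card α := by
  set N := Fintype.card α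
  have hfib := card_eq_sum_card_fiberwise (f := card) (t := {0, 1, N - 1, N})
    (s := univ.filter fun A : Finset α => ¬(2 ≤ #A ∧ #A ≤ N - 2)) fun A hA => by
      have := card_le_univ A
      rw [mem_coe, mem_filter] at hA
      simp only [coe_insert, coe_singleton, Set.mem_insert_iff, Set.mem_singleton_iff]
      omega
  have hfib' : ∀ k ∈ ({0, 1, N - 1, N} : Finset ℕ),
      #((univ.filter fun A : Finset α => ¬(2 ≤ #A ∧ #A ≤ N - 2)).filter fun A => #A = k) =
        N.choose k := by
    intro k hk
    rw [filter_filter, ← card_filter_card_eq]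
    congr 1
    refine filter_congr fun A _ => ?_
    simp only [mem_insert, mem_singleton] at hk
    omega
  rw [sum_congr rfl hfib'] at hfib
  rw [sum_insert (by simp; omega), sum_insert (by simp; omega), sum_insert (by simp; omega),
    sum_singleton, Nat.choose_zero_right, Nat.choose_self,
    Nat.choose_symm_of_eq_add (by omega : N = (N - 1) + 1), Nat.choose_one_right] at hfib
  have := card_filter_add_card_filter_not (s := (univ : Finset (Finset α)))
    (p := fun A => 2 ≤ #A ∧ #A ≤ N - 2)
  rw [card_univ, Fintype.card_finset] at this
  change _ = 2 ^ N at this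
  omega

variable [DecidableEq α]

lemma two_mul_card_filter_mem (s : Finset (Finset α)) (hs : ∀ A ∈ s, Aᶜ ∈ s) (x : α) :
    2 * #(s.filter (x ∈ ·)) = #s := by
  have h : s.filter (x ∉ ·) = (s.filter (x ∈ ·)).image compl := by
    ext A
    simp only [mem_filter, mem_image]
    refine ⟨fun hA => ⟨Aᶜ, ⟨hs A hA.1, mem_compl.2 hA.2⟩, compl_compl A⟩, ?_⟩
    rintro ⟨B, ⟨hB, hxB⟩, rfl⟩
    exact ⟨hs B hB, fun h => mem_compl.1 h hxB⟩
  have := card_filter_add_card_filter_not (s := s) (p := (x ∈ ·))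
  rw [h, card_image_of_injective _ compl_injective] at this
  omega

end Counting

section CountingNonAdjacent

variable {n : ℕ} [NeZero n]

lemma card_filter_isCyclicInterval (hn : 4 ≤ n) :
    #(univ.filter fun A : Finset (ZMod n) => (2 ≤ #A ∧ #A ≤ n - 2) ∧ IsCyclicInterval A) =
      n * (n - 3) := by
  have h : (univ.filter fun A : Finset (ZMod n) =>
      (2 ≤ #A ∧ #A ≤ n - 2) ∧ IsCyclicInterval A) =
        (univ ×ˢ Icc 2 (n - 2)).image fun ak : ZMod n × ℕ => cyclicInterval ak.1 ak.2 := by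
    ext A
    simp only [mem_filter, mem_univ, true_and, mem_image, mem_product, mem_Icc, Prod.exists]
    constructor
    · rintro ⟨hcard, hA⟩
      obtain ⟨a, ha⟩ := hA.exists_eq_cyclicInterval_card (by omega)
      exact ⟨a, #A, hcard, ha.symm⟩
    · rintro ⟨a, k, hk, rfl⟩
      rw [card_cyclicInterval (by omega)]
      exact ⟨hk, isCyclicInterval_cyclicInterval a (by omega)⟩
  rw [h, card_image_of_injOn, card_product, card_univ, ZMod.card, Nat.card_Icc]
  · rw [show n - 2 + 1 - 2 = n - 3 by omega]
  · rintro ⟨a, k⟩ hak ⟨a', k'⟩ hak' hI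
    simp only [coe_product, coe_univ, coe_Icc, Set.mem_prod, Set.mem_univ, Set.mem_Icc,
      true_and] at hak hak'
    obtain ⟨rfl, rfl⟩ := cyclicInterval_inj (by omega) (by omega) (by omega) hI
    rfl

lemma card_naIdx (hn : 4 ≤ n) : Fintype.card (NAIdx n) = 2 ^ (n - 1) - 1 - n * (n - 1) / 2 := by
  set s := univ.filter fun A : Finset (ZMod n) =>
    (2 ≤ #A ∧ #A ≤ n - 2) ∧ ¬IsCyclicInterval A
  have hs : ∀ A ∈ s, Aᶜ ∈ s := by
    intro A hA
    simp only [s, mem_filter, mem_univ, true_and] at hA ⊢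
    have hAc := card_compl_bounds hA.1
    exact ⟨hAc, fun hc => hA.2 (compl_compl A ▸ hc.compl (by omega))⟩
  have hhalf := two_mul_card_filter_mem s hs 0
  set S := univ.filter fun A : Finset (ZMod n) => 2 ≤ #A ∧ #A ≤ n - 2
  have hsplit : n * (n - 3) + #s = #S := by
    have h := card_filter_add_card_filter_not (s := S) (p := IsCyclicInterval)
    rwa [filter_filter, filter_filter, card_filter_isCyclicInterval hn] at h
  have htotal : #S + 2 * (n + 1) = 2 ^ n := by
    have h := card_filter_two_le_card_le (α := ZMod n) (by rw [ZMod.card]; omega)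
    rwa [ZMod.card] at h
  have hNA : Fintype.card (NAIdx n) = #(s.filter (0 ∈ ·)) := by
    rw [Fintype.card_subtype, filter_filter]
    exact congrArg card (filter_congr fun A _ => by tauto)
  have hpow : 2 ^ n = 2 * 2 ^ (n - 1) := by rw [← pow_succ']; congr 1; omega
  have hmul : n * (n - 1) = n * (n - 3) + 2 * n := by
    rw [show n - 1 = n - 3 + 2 by omega]; ring
  have heven : n * (n - 1) % 2 = 0 :=
    Nat.even_iff.1 (by simpa [mul_comm] using Nat.even_mul_pred_self n)
  omega

end CountingNonAdjacent

/-- `F'/R'` is a free abelian group, and the images of the generators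
`δ_A` with `A` non-adjacent form a ℤ-basis; in particular `F'/R'` has rank
`2^(n−1) − 1 − n(n−1)/2`. -/
theorem new_presentation_free (n : ℕ) (hn : 4 ≤ n) :
    (∃ b : Module.Basis (NAIdx n) ℤ (FreeAbelianGroup (D0Idx n) ⧸ NewRelations n hn),
      ∀ A : NAIdx n, b A = QuotientAddGroup.mk
        (FreeAbelianGroup.of
          (⟨A.val, A.prop.1, A.prop.2.1, A.prop.2.2.1⟩ : D0Idx n))) ∧
    Module.finrank ℤ (FreeAbelianGroup (D0Idx n) ⧸ NewRelations n hn)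
      = 2 ^ (n - 1) - 1 - n * (n - 1) / 2 := by
  have : NeZero n := ⟨by omega⟩
  obtain ⟨b, hb⟩ := FreeAbelianGroup.exists_basis_quotient_of_eliminating_relations
    (relHead n hn) (fun k => FreeAbelianGroup.restrict _ (relTail n hn k.1.1 k.1.2))
    (relHead_surjective n hn) (fun k k' h => by rw [relTail_eq_of_relHead_eq n hn h])
    (newRelations_eq_closure n hn)
  let e : {A : D0Idx n // ¬IsCyclicInterval A.val} ≃ NAIdx n :=
    { toFun := fun A => ⟨A.1.1, A.1.2.1, A.1.2.2.1, A.1.2.2.2, A.2⟩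
      invFun := fun A => ⟨⟨A.1, A.2.1, A.2.2.1, A.2.2.2.1⟩, A.2.2.2.2⟩
      left_inv := fun _ => rfl
      right_inv := fun _ => rfl }
  refine ⟨⟨b.reindex e, fun A => by rw [Module.Basis.reindex_apply, hb]; rfl⟩, ?_⟩
  rw [Module.finrank_eq_card_basis b, Fintype.card_congr e, card_naIdx hn]
end
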